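/- The function D₂ defined on the set of all linear subspaces of ℝ^n (of arbitrary dimension ≥ 1) by D₂(𝒳,𝒴) = sqrt(max(p,q) − ‖XᵀY‖_F²), where X, Y are orthonormal bases of 𝒳, 𝒴 of dimensions p, q, is a metric: it is nonnegative, vanishes iff 𝒳 = 𝒴, is symmetric, and satisfies the triangle inequality. Moreover its value is independent of the choice of orthonormal bases. -/

import Mathlib

open Matrix

/-- A matrix has orthonormal columns. -/
def hasOrthonormalCols {n p : ℕ} (X : Matrix (Fin n) (Fin p) ℝ) : Prop := Xᵀ * X = 1

/-- Squared Frobenius norm: ‖A‖_F² = tr(AᵀA). -/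
noncomputable def frobSq {a b : ℕ} (A : Matrix (Fin a) (Fin b) ℝ) : ℝ := (Aᵀ * A).trace

/-- Frobenius norm. -/
noncomputable def frob {a b : ℕ} (A : Matrix (Fin a) (Fin b) ℝ) : ℝ := Real.sqrt (frobSq A)

lemma hermMMt {a b : ℕ} (M : Matrix (Fin a) (Fin b) ℝ) : (M * Mᵀ).IsHermitian := by
  simpa [Matrix.conjTranspose_eq_transpose_of_trivial] using
    Matrix.isHermitian_mul_conjTranspose_self M

lemma hermMtM {a b : ℕ} (M : Matrix (Fin a) (Fin b) ℝ) : (Mᵀ * M).IsHermitian := by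
  simpa [Matrix.conjTranspose_eq_transpose_of_trivial] using
    Matrix.isHermitian_conjTranspose_mul_self M

/-- The singular values of a matrix `M`, as square roots of the eigenvalues of the
smaller of the Gram matrices `M Mᵀ` and `Mᵀ M`; there are `min a b` of them. -/
noncomputable def singVals {a b : ℕ} (M : Matrix (Fin a) (Fin b) ℝ) :
    Fin (min a b) → ℝ :=
  if a ≤ b then
    fun k => Real.sqrt ((hermMMt M).eigenvalues (Fin.castLE (Nat.min_le_left a b) k))
  else
    fun k => Real.sqrt ((hermMtM M).eigenvalues (Fin.castLE (Nat.min_le_right a b) k))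

/-- Subspace distance D₂. -/
noncomputable def D2 {n p q : ℕ} (X : Matrix (Fin n) (Fin p) ℝ)
    (Y : Matrix (Fin n) (Fin q) ℝ) : ℝ :=
  Real.sqrt (max (p : ℝ) (q : ℝ) - frobSq (Xᵀ * Y))

/-- Principal-angle distance D₁ = ‖arccos σ(XᵀY)‖₂. -/
noncomputable def D1 {n p q : ℕ} (X : Matrix (Fin n) (Fin p) ℝ)
    (Y : Matrix (Fin n) (Fin q) ℝ) : ℝ :=
  Real.sqrt (∑ k, (Real.arccos (singVals (Xᵀ * Y) k)) ^ 2)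

/-!
With `P = X Xᵀ` and `Q = Y Yᵀ` the orthogonal projections onto the two subspaces,
`‖Xᵀ Y‖_F² = tr (P Q)`, and expanding `‖P - Q‖_F²` gives `2 D₂(X, Y)² = ‖P - Q‖_F² + |p - q|`.
So `√2 D₂` is the `ℓ²`-combination of two metrics on subspaces, `‖P - Q‖_F` and `√|p - q|`,
hence a metric; it depends on the bases only through the projections, and the projection
determines the subspace (its range) and conversely.
-/

open scoped Matrix.Norms.Frobenius

theorem Real.sqrt_add_le_add_sqrt {x y : ℝ} (hx : 0 ≤ x) (hy : 0 ≤ y) : √(x + y) ≤ √x + √y := by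
  rw [Real.sqrt_le_left (by positivity)]
  nlinarith [Real.sq_sqrt hx, Real.sq_sqrt hy, Real.sqrt_nonneg x, Real.sqrt_nonneg y]

theorem Real.sqrt_sq_add_sq_le {a b c d e f : ℝ} (ha : 0 ≤ a) (hd : 0 ≤ d) (habc : a ≤ b + c)
    (hdef : d ≤ e + f) : √(a ^ 2 + d ^ 2) ≤ √(b ^ 2 + e ^ 2) + √(c ^ 2 + f ^ 2) := by
  have hnorm (x y : ℝ) : ‖!₂[x, y]‖ = √(x ^ 2 + y ^ 2) := by
    simp [EuclideanSpace.norm_eq, Fin.sum_univ_two]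
  calc √(a ^ 2 + d ^ 2) ≤ √((b + c) ^ 2 + (e + f) ^ 2) := by gcongr
    _ = ‖!₂[b, e] + !₂[c, f]‖ := by rw [← hnorm]; congr 1; ext i; fin_cases i <;> rfl
    _ ≤ ‖!₂[b, e]‖ + ‖!₂[c, f]‖ := norm_add_le _ _
    _ = √(b ^ 2 + e ^ 2) + √(c ^ 2 + f ^ 2) := by rw [hnorm, hnorm]

theorem frobSq_eq_norm_sq {a b : ℕ} (A : Matrix (Fin a) (Fin b) ℝ) : frobSq A = ‖A‖ ^ 2 := by
  change _ = ‖WithLp.toLp 2 fun i => WithLp.toLp 2 fun j => A i j‖ ^ 2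
  simp only [PiLp.norm_sq_eq_of_L2, Real.norm_eq_abs, sq_abs]
  simp [frobSq, Matrix.trace, Matrix.mul_apply, sq, Finset.sum_comm (γ := Fin a)]

theorem norm_sub_sq_of_isIdempotentElem {m : ℕ} {P Q : Matrix (Fin m) (Fin m) ℝ}
    (hPs : P.IsSymm) (hQs : Q.IsSymm) (hP : IsIdempotentElem P) (hQ : IsIdempotentElem Q) :
    ‖P - Q‖ ^ 2 = P.trace + Q.trace - 2 * (P * Q).trace := by
  have hsq : (P - Q) * (P - Q) = P * P - P * Q - Q * P + Q * Q := by noncomm_ring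
  rw [← frobSq_eq_norm_sq, frobSq, transpose_sub, hPs.eq, hQs.eq, hsq, hP.eq, hQ.eq,
    trace_add, trace_sub, trace_sub, trace_mul_comm Q P]
  ring

section OrthonormalCols

variable {n p q : ℕ}

theorem hasOrthonormalCols.mul_transpose_mul_self {X : Matrix (Fin n) (Fin p) ℝ}
    (hX : hasOrthonormalCols X) : X * Xᵀ * X = X := by
  rw [Matrix.mul_assoc, hX, Matrix.mul_one]

theorem isSymm_mul_transpose (X : Matrix (Fin n) (Fin p) ℝ) : (X * Xᵀ).IsSymm := by
  rw [IsSymm, transpose_mul, transpose_transpose]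

theorem hasOrthonormalCols.isIdempotentElem {X : Matrix (Fin n) (Fin p) ℝ}
    (hX : hasOrthonormalCols X) : IsIdempotentElem (X * Xᵀ) := by
  rw [IsIdempotentElem, ← Matrix.mul_assoc, hX.mul_transpose_mul_self]

theorem hasOrthonormalCols.trace_mul_transpose {X : Matrix (Fin n) (Fin p) ℝ}
    (hX : hasOrthonormalCols X) : (X * Xᵀ).trace = p := by
  rw [trace_mul_comm, hX, trace_one, Fintype.card_fin]

theorem frobSq_transpose_mul (X : Matrix (Fin n) (Fin p) ℝ) (Y : Matrix (Fin n) (Fin q) ℝ) :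
    frobSq (Xᵀ * Y) = (X * Xᵀ * (Y * Yᵀ)).trace := by
  rw [frobSq, transpose_mul, transpose_transpose, Matrix.mul_assoc, trace_mul_comm]
  simp only [Matrix.mul_assoc]

theorem D2_eq_of_hasOrthonormalCols {X : Matrix (Fin n) (Fin p) ℝ} {Y : Matrix (Fin n) (Fin q) ℝ}
    (hX : hasOrthonormalCols X) (hY : hasOrthonormalCols Y) :
    D2 X Y = √(‖X * Xᵀ - Y * Yᵀ‖ ^ 2 + √|(p : ℝ) - q| ^ 2) / √2 := by
  rw [D2, norm_sub_sq_of_isIdempotentElem (isSymm_mul_transpose X) (isSymm_mul_transpose Y)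
      hX.isIdempotentElem hY.isIdempotentElem, hX.trace_mul_transpose, hY.trace_mul_transpose,
    ← frobSq_transpose_mul, Real.sq_sqrt (abs_nonneg _), ← Real.sqrt_div' _ zero_le_two]
  congr 1
  rcases le_total (p : ℝ) q with h | h
  · rw [max_eq_right h, abs_of_nonpos (sub_nonpos.mpr h)]; ring
  · rw [max_eq_left h, abs_of_nonneg (sub_nonneg.mpr h)]; ring

theorem hasOrthonormalCols.mul_transpose_mul_eq_self_iff {Y : Matrix (Fin n) (Fin q) ℝ}
    (hY : hasOrthonormalCols Y) (X : Matrix (Fin n) (Fin p) ℝ) :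
    Y * Yᵀ * X = X ↔ Set.range X.mulVec ⊆ Set.range Y.mulVec := by
  constructor
  · rintro h _ ⟨v, rfl⟩
    exact ⟨Yᵀ *ᵥ X *ᵥ v, by rw [mulVec_mulVec, mulVec_mulVec, h]⟩
  · intro h
    refine ext_iff_mulVec.mpr fun v => ?_
    obtain ⟨w, hw⟩ := h ⟨v, rfl⟩
    rw [← mulVec_mulVec, ← hw, mulVec_mulVec, hY.mul_transpose_mul_self]

theorem range_mulVec_eq_iff_mul_transpose_eq {X : Matrix (Fin n) (Fin p) ℝ}
    {Y : Matrix (Fin n) (Fin q) ℝ} (hX : hasOrthonormalCols X) (hY : hasOrthonormalCols Y) :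
    Set.range X.mulVec = Set.range Y.mulVec ↔ X * Xᵀ = Y * Yᵀ := by
  rw [Set.Subset.antisymm_iff, ← hY.mul_transpose_mul_eq_self_iff,
    ← hX.mul_transpose_mul_eq_self_iff]
  constructor
  · rintro ⟨hQX, hPY⟩
    have hQP : Y * Yᵀ * (X * Xᵀ) = X * Xᵀ := by rw [← Matrix.mul_assoc, hQX]
    calc X * Xᵀ = (Y * Yᵀ * (X * Xᵀ))ᵀ := by rw [hQP, (isSymm_mul_transpose X).eq]
      _ = X * Xᵀ * (Y * Yᵀ) := by
        rw [transpose_mul, (isSymm_mul_transpose X).eq, (isSymm_mul_transpose Y).eq]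
      _ = Y * Yᵀ := by rw [← Matrix.mul_assoc, hPY]
  · intro h
    exact ⟨by rw [← h, hX.mul_transpose_mul_self], by rw [h, hY.mul_transpose_mul_self]⟩

theorem D2_eq_zero_iff_mul_transpose_eq {X : Matrix (Fin n) (Fin p) ℝ}
    {Y : Matrix (Fin n) (Fin q) ℝ} (hX : hasOrthonormalCols X) (hY : hasOrthonormalCols Y) :
    D2 X Y = 0 ↔ X * Xᵀ = Y * Yᵀ := by
  have hdim (h : X * Xᵀ = Y * Yᵀ) : p = q := by
    exact_mod_cast hX.trace_mul_transpose.symm.trans (h ▸ hY.trace_mul_transpose)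
  rw [D2_eq_of_hasOrthonormalCols hX hY, div_eq_zero_iff, Real.sqrt_eq_zero (by positivity),
    add_eq_zero_iff_of_nonneg (sq_nonneg _) (sq_nonneg _)]
  simpa [sub_eq_zero] using hdim

end OrthonormalCols

/-- D₂ is a metric on the set of linear subspaces of ℝⁿ (of dimension ≥ 1),
represented via matrices with orthonormal columns whose column spaces are the subspaces:
nonnegativity, identity of indiscernibles (vanishes iff the subspaces coincide), symmetry,
the triangle inequality, and independence of the choice of orthonormal bases. -/
theorem D2_is_metric {n : ℕ} :
    (∀ (p q : ℕ), 1 ≤ p → 1 ≤ q →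
      ∀ (X : Matrix (Fin n) (Fin p) ℝ) (Y : Matrix (Fin n) (Fin q) ℝ),
        hasOrthonormalCols X → hasOrthonormalCols Y →
          0 ≤ D2 X Y) ∧
    (∀ (p q : ℕ), 1 ≤ p → 1 ≤ q →
      ∀ (X : Matrix (Fin n) (Fin p) ℝ) (Y : Matrix (Fin n) (Fin q) ℝ),
        hasOrthonormalCols X → hasOrthonormalCols Y →
          (D2 X Y = 0 ↔ Set.range X.mulVec = Set.range Y.mulVec)) ∧
    (∀ (p q : ℕ), 1 ≤ p → 1 ≤ q →
      ∀ (X : Matrix (Fin n) (Fin p) ℝ) (Y : Matrix (Fin n) (Fin q) ℝ),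
        hasOrthonormalCols X → hasOrthonormalCols Y →
          D2 X Y = D2 Y X) ∧
    (∀ (p q r : ℕ), 1 ≤ p → 1 ≤ q → 1 ≤ r →
      ∀ (X : Matrix (Fin n) (Fin p) ℝ) (Y : Matrix (Fin n) (Fin q) ℝ)
        (Z : Matrix (Fin n) (Fin r) ℝ),
        hasOrthonormalCols X → hasOrthonormalCols Y → hasOrthonormalCols Z →
          D2 X Y ≤ D2 X Z + D2 Z Y) ∧
    (∀ (p q : ℕ), 1 ≤ p → 1 ≤ q →
      ∀ (X X' : Matrix (Fin n) (Fin p) ℝ) (Y Y' : Matrix (Fin n) (Fin q) ℝ),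
        hasOrthonormalCols X → hasOrthonormalCols X' →
        hasOrthonormalCols Y → hasOrthonormalCols Y' →
        Set.range X.mulVec = Set.range X'.mulVec →
        Set.range Y.mulVec = Set.range Y'.mulVec →
          D2 X Y = D2 X' Y') := by
  refine ⟨?nonneg, ?eq_zero, ?symm, ?triangle, ?basis_indep⟩
  · exact fun _ _ _ _ _ _ _ _ => Real.sqrt_nonneg _
  · intro p q _ _ X Y hX hY
    rw [D2_eq_zero_iff_mul_transpose_eq hX hY, range_mulVec_eq_iff_mul_transpose_eq hX hY]
  · intro p q _ _ X Y hX hY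
    rw [D2_eq_of_hasOrthonormalCols hX hY, D2_eq_of_hasOrthonormalCols hY hX, norm_sub_rev,
      abs_sub_comm]
  · intro p q r _ _ _ X Y Z hX hY hZ
    rw [D2_eq_of_hasOrthonormalCols hX hY, D2_eq_of_hasOrthonormalCols hX hZ,
      D2_eq_of_hasOrthonormalCols hZ hY, ← add_div]
    have hdim : √|(p : ℝ) - q| ≤ √|(p : ℝ) - r| + √|(r : ℝ) - q| :=
      (Real.sqrt_le_sqrt (abs_sub_le _ _ _)).trans
        (Real.sqrt_add_le_add_sqrt (abs_nonneg _) (abs_nonneg _))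
    gcongr
    exact Real.sqrt_sq_add_sq_le (norm_nonneg _) (Real.sqrt_nonneg _)
      (norm_sub_le_norm_sub_add_norm_sub _ _ _) hdim
  · intro p q _ _ X X' Y Y' hX hX' hY hY' hXX' hYY'
    rw [D2_eq_of_hasOrthonormalCols hX hY, D2_eq_of_hasOrthonormalCols hX' hY',
      (range_mulVec_eq_iff_mul_transpose_eq hX hX').mp hXX',
      (range_mulVec_eq_iff_mul_transpose_eq hY hY').mp hYY']
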